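/- For every C₀ ≥ 1 there are constants c ≥ 1 and C > 0 with the following property (asymptote of the periodic Newtonian potential). Let a = (a_{ij}) be a real symmetric positive definite 2×2 matrix with A = det a ≥ 1 which is C₀-elliptic. Define, for (μ₁, μ₂, x, y) ∈ ℝ⁴, the periodic Green kernel G_a(μ₁, μ₂, x, y) = −(1/(4π²)) Σ_{n∈ℤ} 1/(a₁₁μ₁² + 2a₁₂μ₁μ₂ + a₂₂μ₂² + A((x+n)² + y²)), and write ϱ' = √(a₁₁μ₁² + 2a₁₂μ₁μ₂ + a₂₂μ₂² + Ay²). Then for every point with ϱ' ≥ c·A^{1/2}, the series converges absolutely and |G_a(μ₁, μ₂, x, y) + 1/(4π·√A·ϱ')| ≤ C·√A/ϱ'³. -/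

import Mathlib

/-- `C₀`-ellipticity of the symmetric matrix `(a_{ij})`. -/
def IsElliptic (C₀ a11 a12 a22 : ℝ) : Prop :=
  ∀ v1 v2 : ℝ,
    C₀⁻¹ * Real.sqrt (a11 * a22 - a12 ^ 2) * (v1 ^ 2 + v2 ^ 2)
        ≤ a11 * v1 ^ 2 + 2 * a12 * v1 * v2 + a22 * v2 ^ 2 ∧
      a11 * v1 ^ 2 + 2 * a12 * v1 * v2 + a22 * v2 ^ 2
        ≤ C₀ * Real.sqrt (a11 * a22 - a12 ^ 2) * (v1 ^ 2 + v2 ^ 2)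

open MeasureTheory Real Set

/-!
With `S = ϱ'²`, the `n`-th term of the series is `f (x + n)` for the Lorentzian
`f t = (S + A t²)⁻¹`, and `∫ f = π / √(A S)` is `4π²` times the claimed asymptote.
By the midpoint rule, `f (x + n)` differs from the mean of `f` over `[x + n - 1/2, x + n + 1/2]`
by at most half the symmetric second difference of `f`, which is `O(A f(x + n)²)` once `S ≥ A`
(this is what `ϱ' ≥ √A` is for). Summing `f (x + n)²` over `n ∈ ℤ` by the integral test bounds
the total error by `O(√A / S^{3/2})`.
-/

lemma abs_intervalIntegral_sub_midpoint_le {g : ℝ → ℝ} (hg : Continuous g) {u M : ℝ}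
    (hM : ∀ s ∈ Icc (0 : ℝ) (1 / 2), |g (u + s) + g (u - s) - 2 * g u| ≤ M) :
    |(∫ t in u - 1 / 2..u + 1 / 2, g t) - g u| ≤ M / 2 := by
  have hplus : Continuous fun s => g (u + s) := by fun_prop
  have hminus : Continuous fun s => g (u - s) := by fun_prop
  have hsym : ∫ t in u - 1 / 2..u + 1 / 2, g t
      = ∫ s in (0 : ℝ)..1 / 2, (g (u + s) + g (u - s)) := by
    rw [intervalIntegral.integral_add (hplus.intervalIntegrable _ _)
        (hminus.intervalIntegrable _ _), intervalIntegral.integral_comp_add_left,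
      intervalIntegral.integral_comp_sub_left, add_zero, sub_zero]
    exact (intervalIntegral.integral_add_adjacent_intervals (hg.intervalIntegrable _ _)
        (hg.intervalIntegrable _ _)).symm.trans (add_comm _ _)
  have hdiff : (∫ t in u - 1 / 2..u + 1 / 2, g t) - g u
      = ∫ s in (0 : ℝ)..1 / 2, (g (u + s) + g (u - s) - 2 * g u) := by
    rw [hsym, intervalIntegral.integral_sub _ intervalIntegrable_const,
      intervalIntegral.integral_const, smul_eq_mul]
    · ring
    · exact (hplus.add hminus).intervalIntegrable _ _
  rw [hdiff, ← Real.norm_eq_abs]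
  calc _ ≤ M * |1 / 2 - 0| := intervalIntegral.norm_integral_le_of_norm_le_const fun s hs =>
        hM s (Ioc_subset_Icc_self (by rwa [uIoc_of_le (by norm_num)] at hs))
    _ = M / 2 := by norm_num; ring

lemma abs_tsum_int_sub_integral_le {g : ℝ → ℝ} {e : ℤ → ℝ} (hg : Integrable g)
    (hgs : Summable fun n : ℤ => g n) (he : Summable e)
    (hbound : ∀ n : ℤ, |(∫ t in (n : ℝ) - 1 / 2..n + 1 / 2, g t) - g n| ≤ e n) :
    |∑' n : ℤ, g n - ∫ t, g t| ≤ ∑' n, e n := by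
  have hI : HasSum (fun n : ℤ => ∫ t in (n : ℝ) - 1 / 2..n + 1 / 2, g t) (∫ t, g t) := by
    convert hg.hasSum_intervalIntegral (-1 / 2) using 3
    all_goals first | rfl | ring
  exact (hgs.hasSum.sub hI).norm_le_of_bounded he.hasSum fun n => by
    rw [Real.norm_eq_abs, abs_sub_comm]; exact hbound n

lemma apply_le_of_even_of_antitoneOn {φ : ℝ → ℝ} (heven : Function.Even φ)
    (hanti : AntitoneOn φ (Ici 0)) {r t : ℝ} (hr : 0 ≤ r) (hrt : r ≤ |t|) : φ t ≤ φ r := by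
  have habs : φ |t| = φ t := by
    rcases abs_choice t with h | h <;> rw [h]
    exact heven t
  exact habs ▸ hanti hr (abs_nonneg t) hrt

lemma summable_and_tsum_int_le_of_even_of_antitoneOn {φ : ℝ → ℝ} (heven : Function.Even φ)
    (hanti : AntitoneOn φ (Ici 0)) (hint : IntegrableOn φ (Ioi 0)) (hnonneg : ∀ t, 0 ≤ φ t)
    (x : ℝ) :
    Summable (fun n : ℤ => φ (x + n)) ∧ ∑' n : ℤ, φ (x + n) ≤ 2 * (φ 0 + ∫ t in Ioi 0, φ t) := by
  have hsum_nat : Summable fun k : ℕ => φ k :=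
    hanti.summable_of_integrableOn_Ioi_zero hint fun t _ => hnonneg t
  have htsum_nat := hanti.tsum_le_integral hint fun t _ => hnonneg t
  -- Reduce to `x' ∈ [0, 1)`, where `|x' + k| ≥ k` and `|x' - (k + 1)| ≥ k` for `k : ℕ`.
  set x' := Int.fract x
  have hx0 : 0 ≤ x' := Int.fract_nonneg x
  have hx1 : x' < 1 := Int.fract_lt_one x
  have hpos : ∀ k : ℕ, φ (x' + (k : ℤ)) ≤ φ k := fun k =>
    apply_le_of_even_of_antitoneOn heven hanti k.cast_nonneg (by
      rw [abs_of_nonneg (by positivity)]; push_cast; linarith)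
  have hneg : ∀ k : ℕ, φ (x' + (-((k : ℤ) + 1) : ℤ)) ≤ φ k := fun k =>
    apply_le_of_even_of_antitoneOn heven hanti k.cast_nonneg (by
      push_cast; rw [abs_of_nonpos (by linarith)]; linarith)
  have hpos_s : Summable fun k : ℕ => φ (x' + (k : ℤ)) :=
    Summable.of_nonneg_of_le (fun _ => hnonneg _) hpos hsum_nat
  have hneg_s : Summable fun k : ℕ => φ (x' + (-((k : ℤ) + 1) : ℤ)) :=
    Summable.of_nonneg_of_le (fun _ => hnonneg _) hneg hsum_nat
  have hshift : ∀ n : ℤ, φ (x + n) = φ (x' + (n + ⌊x⌋ : ℤ)) := fun n => by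
    push_cast [x', Int.fract]; ring_nf
  have hreindex := (Equiv.addRight ⌊x⌋).tsum_eq (fun n : ℤ => φ (x' + n))
  simp only [Equiv.coe_addRight] at hreindex
  simp only [hshift]
  refine ⟨(Equiv.addRight ⌊x⌋).summable_iff.2 <|
    Summable.of_nat_of_neg_add_one (f := fun n : ℤ => φ (x' + n)) hpos_s hneg_s, ?_⟩
  rw [hreindex, tsum_of_nat_of_neg_add_one (f := fun n : ℤ => φ (x' + n)) hpos_s hneg_s]
  have h1 := hpos_s.tsum_le_tsum hpos hsum_nat
  have h2 := hneg_s.tsum_le_tsum hneg hsum_nat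
  linarith

section Lorentzian

variable {A S : ℝ}

lemma inv_add_mul_sq_eq (hA : 0 < A) (hS : 0 < S) (t : ℝ) :
    (S + A * t ^ 2)⁻¹ = S⁻¹ * (1 + (t / √(S / A)) ^ 2)⁻¹ := by
  rw [div_pow, sq_sqrt (by positivity), ← mul_inv]
  congr 1
  field_simp

lemma integrable_inv_add_mul_sq (hA : 0 < A) (hS : 0 < S) :
    Integrable fun t : ℝ => (S + A * t ^ 2)⁻¹ := by
  simp_rw [inv_add_mul_sq_eq hA hS]
  exact (integrable_inv_one_add_sq.comp_div (sqrt_pos.2 (by positivity)).ne').const_mul _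

lemma integral_inv_add_mul_sq (hA : 0 < A) (hS : 0 < S) :
    ∫ t : ℝ, (S + A * t ^ 2)⁻¹ = π / (√A * √S) := by
  simp_rw [inv_add_mul_sq_eq hA hS]
  rw [integral_const_mul, Measure.integral_comp_div (fun y => (1 + y ^ 2)⁻¹),
    integral_univ_inv_one_add_sq, abs_of_pos (sqrt_pos.2 (by positivity)), smul_eq_mul,
    sqrt_div hS.le]
  have := sq_sqrt hS.le
  have := sqrt_pos.2 hA
  field_simp
  linarith

lemma abs_inv_add_mul_sq_second_diff_le (u : ℝ) {s : ℝ} (hA : 0 < A) (hAS : A ≤ S)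
    (hs : |s| ≤ 1 / 2) :
    |(S + A * (u + s) ^ 2)⁻¹ + (S + A * (u - s) ^ 2)⁻¹ - 2 * (S + A * u ^ 2)⁻¹|
      ≤ 24 * A * (S + A * u ^ 2)⁻¹ ^ 2 := by
  have hS : 0 < S := hA.trans_le hAS
  have hs2 : A * s ^ 2 ≤ A / 4 := by
    have : s ^ 2 ≤ 1 / 4 := by rw [← sq_abs]; nlinarith [abs_nonneg s]
    nlinarith
  have hp : 0 ≤ A * s ^ 2 := by positivity
  have hq : 0 ≤ A * u ^ 2 := by positivity
  have hD : 0 < S + A * u ^ 2 := by positivity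
  have hDp : (S + A * u ^ 2) / 4 ≤ S + A * (u + s) ^ 2 := by
    nlinarith [sq_nonneg (3 * u + 4 * s)]
  have hDm : (S + A * u ^ 2) / 4 ≤ S + A * (u - s) ^ 2 := by
    nlinarith [sq_nonneg (3 * u - 4 * s)]
  have hsecond : (S + A * (u + s) ^ 2)⁻¹ + (S + A * (u - s) ^ 2)⁻¹ - 2 * (S + A * u ^ 2)⁻¹
      = 2 * (A * s ^ 2) * (3 * (A * u ^ 2) - S - A * s ^ 2)
        / ((S + A * (u + s) ^ 2) * (S + A * (u - s) ^ 2) * (S + A * u ^ 2)) := by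
    have : 0 < S + A * (u + s) ^ 2 := by positivity
    have : 0 < S + A * (u - s) ^ 2 := by positivity
    field_simp
    ring
  have hnum : |2 * (A * s ^ 2) * (3 * (A * u ^ 2) - S - A * s ^ 2)|
      ≤ 3 / 2 * A * (S + A * u ^ 2) := by
    rw [abs_le]
    constructor
    · nlinarith [mul_nonneg (sub_nonneg.2 hs2) hS.le, mul_nonneg hp (sub_nonneg.2 hs2)]
    · nlinarith [mul_nonneg (sub_nonneg.2 hs2) hq, mul_nonneg hp hS.le]
  have hden : (S + A * u ^ 2) / 4 * ((S + A * u ^ 2) / 4) * (S + A * u ^ 2)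
      ≤ (S + A * (u + s) ^ 2) * (S + A * (u - s) ^ 2) * (S + A * u ^ 2) := by
    gcongr
  rw [hsecond, abs_div, abs_of_pos (lt_of_lt_of_le (by positivity) hden)]
  calc _ ≤ 3 / 2 * A * (S + A * u ^ 2)
        / ((S + A * u ^ 2) / 4 * ((S + A * u ^ 2) / 4) * (S + A * u ^ 2)) :=
        div_le_div₀ (by positivity) hnum (by positivity) hden
    _ = 24 * A * (S + A * u ^ 2)⁻¹ ^ 2 := by field_simp; ring

lemma even_inv_add_mul_sq : Function.Even fun t : ℝ => (S + A * t ^ 2)⁻¹ := fun t => by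
  simp only [neg_sq]

lemma antitoneOn_inv_add_mul_sq (hA : 0 ≤ A) (hS : 0 < S) :
    AntitoneOn (fun t : ℝ => (S + A * t ^ 2)⁻¹) (Ici 0) := fun a ha b _ hab =>
  inv_anti₀ (by positivity) (by gcongr)

lemma summable_and_tsum_int_inv_add_mul_sq_sq_le (x : ℝ) (hA : 0 < A) (hS : 0 < S) :
    Summable (fun n : ℤ => (S + A * (x + n) ^ 2)⁻¹ ^ 2) ∧
      ∑' n : ℤ, (S + A * (x + n) ^ 2)⁻¹ ^ 2 ≤ 2 * (S⁻¹ ^ 2 + S⁻¹ * (π / (√A * √S))) := by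
  set f : ℝ → ℝ := fun t => (S + A * t ^ 2)⁻¹ with hf
  have hf_int : Integrable f := integrable_inv_add_mul_sq hA hS
  have hf2_le : ∀ t, f t ^ 2 ≤ S⁻¹ * f t := fun t => by
    rw [sq]
    exact mul_le_mul_of_nonneg_right (inv_anti₀ hS (by nlinarith [sq_nonneg t])) (by positivity)
  have hf2_int : Integrable fun t => f t ^ 2 :=
    (hf_int.const_mul S⁻¹).mono (by fun_prop (disch := intro t; positivity))
      (Filter.Eventually.of_forall fun t => by
        rw [norm_of_nonneg (by positivity), norm_of_nonneg (by positivity)]; exact hf2_le t)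
  have hf2_integral : ∫ t in Ioi 0, f t ^ 2 ≤ S⁻¹ * (π / (√A * √S)) :=
    calc ∫ t in Ioi 0, f t ^ 2 ≤ ∫ t, f t ^ 2 :=
          setIntegral_le_integral hf2_int (Filter.Eventually.of_forall fun t => by positivity)
      _ ≤ ∫ t, S⁻¹ * f t := integral_mono hf2_int (hf_int.const_mul _) hf2_le
      _ = S⁻¹ * (π / (√A * √S)) := by rw [integral_const_mul, integral_inv_add_mul_sq hA hS]
  obtain ⟨hsum, htsum⟩ := summable_and_tsum_int_le_of_even_of_antitoneOn
    (φ := fun t => f t ^ 2) (fun t => congrArg (· ^ 2) (even_inv_add_mul_sq t))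
    (fun a ha b hb hab => pow_le_pow_left₀ (by positivity)
      (antitoneOn_inv_add_mul_sq hA.le hS ha hb hab) 2)
    hf2_int.integrableOn (fun t => by positivity) x
  refine ⟨hsum, htsum.trans ?_⟩
  simp only [hf, sq, mul_zero, add_zero] at hf2_integral ⊢
  linarith

lemma summable_and_abs_tsum_inv_add_mul_sq_sub_le (x : ℝ) (hA : 0 < A) (hAS : A ≤ S) :
    Summable (fun n : ℤ => (S + A * (x + n) ^ 2)⁻¹) ∧
      |∑' n : ℤ, (S + A * (x + n) ^ 2)⁻¹ - π / (√A * √S)| ≤ 24 * (1 + π) * √A / √S ^ 3 := by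
  have hS : 0 < S := hA.trans_le hAS
  set f : ℝ → ℝ := fun t => (S + A * t ^ 2)⁻¹ with hf
  have hf_int : Integrable f := integrable_inv_add_mul_sq hA hS
  obtain ⟨hsum, -⟩ := summable_and_tsum_int_le_of_even_of_antitoneOn even_inv_add_mul_sq
    (antitoneOn_inv_add_mul_sq hA.le hS) hf_int.integrableOn (fun t => by positivity) x
  obtain ⟨hsum2, htsum2⟩ := summable_and_tsum_int_inv_add_mul_sq_sq_le x hA hS
  refine ⟨hsum, ?_⟩
  have hmidpoint : ∀ n : ℤ, |(∫ t in (n : ℝ) - 1 / 2..n + 1 / 2, f (x + t)) - f (x + n)|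
      ≤ 12 * A * f (x + n) ^ 2 := fun n => by
    refine (abs_intervalIntegral_sub_midpoint_le (g := fun t => f (x + t)) (u := n)
      (M := 24 * A * f (x + n) ^ 2) (by fun_prop (disch := intro t; positivity))
      fun s hs => ?_).trans_eq (by ring)
    simpa only [hf, ← add_assoc, ← add_sub_assoc] using
      abs_inv_add_mul_sq_second_diff_le (x + n) hA hAS
        (abs_le.2 ⟨by linarith [hs.1], by linarith [hs.2]⟩)
  have herror := abs_tsum_int_sub_integral_le (hf_int.comp_add_left x) hsum
    (hsum2.mul_left (12 * A)) hmidpoint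
  rw [integral_add_left_eq_self f x, integral_inv_add_mul_sq hA hS, tsum_mul_left] at herror
  calc _ ≤ 12 * A * ∑' n : ℤ, f (x + n) ^ 2 := herror
    _ ≤ 12 * A * (2 * (S⁻¹ ^ 2 + S⁻¹ * (π / (√A * √S)))) := by gcongr
    _ = 24 * (√A / √S + π) * √A / √S ^ 3 := by
        obtain ⟨a, ha, rfl⟩ : ∃ a, 0 < a ∧ a ^ 2 = A := ⟨√A, sqrt_pos.2 hA, sq_sqrt hA.le⟩
        obtain ⟨b, hb, rfl⟩ : ∃ b, 0 < b ∧ b ^ 2 = S := ⟨√S, sqrt_pos.2 hS, sq_sqrt hS.le⟩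
        rw [sqrt_sq ha.le, sqrt_sq hb.le]
        field_simp
        ring
    _ ≤ 24 * (1 + π) * √A / √S ^ 3 := by
        gcongr
        exact (div_le_one (sqrt_pos.2 hS)).2 (sqrt_le_sqrt hAS)

end Lorentzian

/-- asymptote of the periodic Newtonian potential
`G_a = −(1/4π²) Σ_{n∈ℤ} 1/(a₁₁μ₁² + 2a₁₂μ₁μ₂ + a₂₂μ₂² + A((x+n)² + y²))`:
for `ϱ' ≥ c·A^{1/2}` the series converges absolutely and
`|G_a + 1/(4π√A·ϱ')| ≤ C√A/ϱ'³` where `ϱ' = √(a₁₁μ₁² + 2a₁₂μ₁μ₂ + a₂₂μ₂² + Ay²)`. -/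
theorem statement9 : ∀ C₀ : ℝ, 1 ≤ C₀ → ∃ c C : ℝ, 1 ≤ c ∧ 0 < C ∧
    ∀ a11 a12 a22 : ℝ, 0 < a11 → 1 ≤ a11 * a22 - a12 ^ 2 → IsElliptic C₀ a11 a12 a22 →
    ∀ μ1 μ2 x y : ℝ,
      c * Real.sqrt (a11 * a22 - a12 ^ 2)
        ≤ Real.sqrt (a11 * μ1 ^ 2 + 2 * a12 * μ1 * μ2 + a22 * μ2 ^ 2
            + (a11 * a22 - a12 ^ 2) * y ^ 2) →
      Summable (fun n : ℤ =>
        |(a11 * μ1 ^ 2 + 2 * a12 * μ1 * μ2 + a22 * μ2 ^ 2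
          + (a11 * a22 - a12 ^ 2) * ((x + n) ^ 2 + y ^ 2))⁻¹|) ∧
      |(-(1 / (4 * Real.pi ^ 2)) * ∑' n : ℤ,
          (a11 * μ1 ^ 2 + 2 * a12 * μ1 * μ2 + a22 * μ2 ^ 2
            + (a11 * a22 - a12 ^ 2) * ((x + n) ^ 2 + y ^ 2))⁻¹)
        + 1 / (4 * Real.pi * Real.sqrt (a11 * a22 - a12 ^ 2) *
            Real.sqrt (a11 * μ1 ^ 2 + 2 * a12 * μ1 * μ2 + a22 * μ2 ^ 2
              + (a11 * a22 - a12 ^ 2) * y ^ 2))|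
      ≤ C * Real.sqrt (a11 * a22 - a12 ^ 2) /
          (Real.sqrt (a11 * μ1 ^ 2 + 2 * a12 * μ1 * μ2 + a22 * μ2 ^ 2
            + (a11 * a22 - a12 ^ 2) * y ^ 2)) ^ 3 := by
  intro C₀ _
  refine ⟨1, 3, le_rfl, by norm_num, ?_⟩
  intro a11 a12 a22 _ hdet _ μ1 μ2 x y hρ
  set A := a11 * a22 - a12 ^ 2
  set S := a11 * μ1 ^ 2 + 2 * a12 * μ1 * μ2 + a22 * μ2 ^ 2 + A * y ^ 2
  have hA : 0 < A := by linarith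
  have hAS : A ≤ S := (sqrt_le_sqrt_iff' hA).1 (by linarith)
  have hterm : ∀ n : ℤ, a11 * μ1 ^ 2 + 2 * a12 * μ1 * μ2 + a22 * μ2 ^ 2
      + A * ((x + n) ^ 2 + y ^ 2) = S + A * (x + n) ^ 2 := fun n => by ring
  simp only [hterm]
  obtain ⟨hsum, hbound⟩ := summable_and_abs_tsum_inv_add_mul_sq_sub_le x hA hAS
  refine ⟨hsum.abs, ?_⟩
  calc _ = |-(1 / (4 * π ^ 2)) * (∑' n : ℤ, (S + A * (x + n) ^ 2)⁻¹ - π / (√A * √S))| := by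
        congr 1
        field_simp
        ring
    _ = 1 / (4 * π ^ 2) * |∑' n : ℤ, (S + A * (x + n) ^ 2)⁻¹ - π / (√A * √S)| := by
        rw [abs_mul, abs_neg, abs_of_pos (by positivity)]
    _ ≤ 1 / (4 * π ^ 2) * (24 * (1 + π) * √A / √S ^ 3) := by gcongr
    _ = 6 * (1 + π) / π ^ 2 * (√A / √S ^ 3) := by ring
    _ ≤ 3 * (√A / √S ^ 3) := by
        gcongr
        rw [div_le_iff₀ (by positivity)]
        nlinarith [pi_gt_three]
    _ = 3 * √A / √S ^ 3 := by ring
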